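/- arXiv:2303.13444 — 5 statements merged into one kernel-verified Lean document; each statement's English description precedes it below -/
import Mathlib

section
/- Let κ be an uncountable regular cardinal and let f : A → B be a faithfully flat homomorphism of commutative rings. Order subextensions of f by componentwise inclusion. Then: (a) every κ-small subextension of f is contained in a κ-small faithfully flat subextension of f (the inclusion of the poset of κ-small faithfully flat subextensions into the poset of κ-small subextensions is cofinal); and (b) the poset of κ-small faithfully flat subextensions of f is κ-directed: every subset of it of cardinality < κ admits an upper bound in it. -/
universe u

/-- A subextension of a ring homomorphism `f : A → B` is a pair of a subring `C ⊆ A` and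
a subring `D ⊆ B` such that `f` maps `C` into `D`, so that `f` restricts to a ring
homomorphism `C → D`. -/
structure Subextension {A B : Type u} [CommRing A] [CommRing B] (f : A →+* B) where
  left : Subring A
  right : Subring B
  maps_mem : ∀ x ∈ left, f x ∈ right

namespace Subextension

variable {A B : Type u} [CommRing A] [CommRing B] {f : A →+* B}

/-- The restriction of `f` to a ring homomorphism `C → D`. -/
def restrict (E : Subextension f) : E.left →+* E.right :=
  (f.comp E.left.subtype).codRestrict E.right fun x => E.maps_mem x x.2

/-- A subextension is `κ`-small if both of its subrings have cardinality `< κ`. -/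
def Small (κ : Cardinal.{u}) (E : Subextension f) : Prop :=
  Cardinal.mk E.left < κ ∧ Cardinal.mk E.right < κ

/-- A subextension is faithfully flat if `D` is a faithfully flat `C`-module via the
restriction of `f`. -/
def FaithfullyFlat (E : Subextension f) : Prop :=
  letI : Algebra E.left E.right := E.restrict.toAlgebra
  Module.FaithfullyFlat E.left E.right

/-- Componentwise inclusion of subextensions. -/
def le (E E' : Subextension f) : Prop :=
  E.left ≤ E'.left ∧ E.right ≤ E'.right

end Subextension

/-!
Faithful flatness of a ring map `C → D` can be tested on finitely many elements at a time: every
relation `∑ cᵢ dᵢ = 0` in `D` must be trivial (equational criterion for flatness), and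
`∑ cᵢ dᵢ = 1` must force `1 ∈ (c₁, …, cₙ)`. Since `A → B` has both properties, each of the
fewer than `κ` relations of a `κ`-small subextension has finitely many witnesses in `A` and `B`;
adjoining them all and iterating `ω` times yields a subextension, still `κ`-small because `κ` is
regular and uncountable, in which every relation has its witnesses, hence a faithfully flat one.
Directedness follows by applying this to the subextension generated by fewer than `κ` small ones.
-/

universe v

open Cardinal

theorem Cardinal.mk_union_lt {α : Type u} {κ : Cardinal.{u}} (hκ : ℵ₀ ≤ κ) {s t : Set α}
    (hs : #s < κ) (ht : #t < κ) : #(s ∪ t : Set α) < κ :=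
  (mk_union_le s t).trans_lt (add_lt_of_lt hκ hs ht)

theorem Cardinal.mk_sigma_fin_arrow_prod_lt {α β : Type u} {κ : Cardinal.{u}} (hκ : ℵ₀ < κ)
    (hα : #α < κ) (hβ : #β < κ) : #(Σ n, (Fin n → α) × (Fin n → β)) < κ :=
  calc #(Σ n, (Fin n → α) × (Fin n → β)) = #(List (α × β)) := mk_congr <|
        (Equiv.sigmaCongrRight fun _ => (Equiv.arrowProdEquivProdArrow _ _ _).symm).trans
          List.equivSigmaTuple.symm
    _ ≤ max ℵ₀ #(α × β) := mk_list_le_max _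
    _ < κ := max_lt hκ (by rw [mk_prod, lift_id, lift_id]; exact mul_lt_of_lt hκ.le hα hβ)

theorem Subring.cardinalMk_closure_le_max {R : Type u} [Ring R] (s : Set R) :
    #(Subring.closure s) ≤ max #s ℵ₀ := by
  rw [Cardinal.mk_congr (Subring.closureEquivAdjoinInt s).toEquiv]
  simpa [or_comm] using Algebra.lift_cardinalMk_adjoin_le ℤ s

theorem Subring.cardinalMk_closure_lt {R : Type u} [Ring R] {s : Set R} {κ : Cardinal.{u}}
    (hκ : ℵ₀ < κ) (hs : #s < κ) : #(Subring.closure s) < κ :=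
  (cardinalMk_closure_le_max s).trans_lt (max_lt hs hκ)

theorem Cardinal.mk_iUnion_lt_of_isRegular {α : Type u} {ι : Type v} {κ : Cardinal.{u}}
    (hκ : κ.IsRegular) (hι : lift.{u} #ι < lift.{v} κ) {s : ι → Set α} (hs : ∀ i, #(s i) < κ) :
    #(⋃ i, s i) < κ := by
  rw [← lift_lt.{u, v}]
  refine mk_iUnion_le_sum_mk_lift.trans_lt ?_
  rw [← lift_id'.{v, u} (sum _), lift_sum]
  exact sum_lt_lift_of_isRegular hκ.lift (by simpa using hι) fun i => by simpa using hs i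

theorem Module.FaithfullyFlat.exists_sum_mul_eq_one {R S : Type*} [CommRing R] [CommRing S]
    [Algebra R S] [Module.FaithfullyFlat R S] {n : ℕ} (a : Fin n → R) (d : Fin n → S)
    (h : ∑ i, algebraMap R S (a i) * d i = 1) : ∃ x : Fin n → R, ∑ i, a i * x i = 1 := by
  have hmap : (1 : S) ∈ (Ideal.span (Set.range a)).map (algebraMap R S) := by
    rw [Ideal.map_span, ← Set.range_comp, Ideal.mem_span_range_iff_exists_fun]
    exact ⟨d, by simpa [mul_comm] using h⟩
  have hone : (1 : R) ∈ Ideal.span (Set.range a) := by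
    simpa using Ideal.comap_map_eq_self_of_faithfullyFlat (B := S) (Ideal.span (Set.range a)) ▸
      Ideal.mem_comap.2 (by simpa using hmap)
  obtain ⟨x, hx⟩ := Ideal.mem_span_range_iff_exists_fun.1 hone
  exact ⟨x, by simpa [mul_comm] using hx⟩

namespace Subextension

variable {A B : Type u} [CommRing A] [CommRing B] {f : A →+* B}

instance : Preorder (Subextension f) where
  le := Subextension.le
  le_refl _ := ⟨le_rfl, le_rfl⟩
  le_trans _ _ _ h h' := ⟨h.1.trans h'.1, h.2.trans h'.2⟩

variable (f) in
def generate (S : Set A) (T : Set B) : Subextension f where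
  left := Subring.closure S
  right := Subring.closure (f '' S ∪ T)
  maps_mem _ hx := Subring.closure_le (t := (Subring.closure _).comap f).2
    (fun _ hy => Subring.subset_closure (Or.inl (Set.mem_image_of_mem f hy))) hx

theorem small_generate {κ : Cardinal.{u}} (hκ : ℵ₀ < κ) {S : Set A} {T : Set B} (hS : #S < κ)
    (hT : #T < κ) : (generate f S T).Small κ :=
  ⟨Subring.cardinalMk_closure_lt hκ hS,
    Subring.cardinalMk_closure_lt hκ (mk_union_lt hκ.le (mk_image_le.trans_lt hS) hT)⟩

def iSup {ι : Sort*} (F : ι → Subextension f) : Subextension f where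
  left := ⨆ i, (F i).left
  right := ⨆ i, (F i).right
  maps_mem x hx := by
    have : (⨆ i, (F i).left).map f ≤ ⨆ i, (F i).right := by
      rw [Subring.map_iSup]
      exact iSup_mono fun i => Subring.map_le_iff_le_comap.2 (F i).maps_mem
    exact this ⟨x, hx, rfl⟩

theorem le_iSup {ι : Sort*} (F : ι → Subextension f) (i : ι) : F i ≤ iSup F :=
  ⟨_root_.le_iSup (fun i => (F i).left) i, _root_.le_iSup (fun i => (F i).right) i⟩

theorem small_iSup {κ : Cardinal.{u}} (hreg : κ.IsRegular) (hκ : ℵ₀ < κ) {ι : Type v}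
    (hι : lift.{u} #ι < lift.{v} κ) {F : ι → Subextension f} (hF : ∀ i, (F i).Small κ) :
    (iSup F).Small κ := by
  have hleft : (iSup F).left = Subring.closure (⋃ i, ((F i).left : Set A)) := by
    simp [Subring.closure_iUnion, iSup]
  have hright : (iSup F).right = Subring.closure (⋃ i, ((F i).right : Set B)) := by
    simp [Subring.closure_iUnion, iSup]
  rw [Small, hleft, hright]
  exact ⟨Subring.cardinalMk_closure_lt hκ (mk_iUnion_lt_of_isRegular hreg hι fun i => (hF i).1),
    Subring.cardinalMk_closure_lt hκ (mk_iUnion_lt_of_isRegular hreg hι fun i => (hF i).2)⟩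

theorem exists_mem_stage {F : ℕ → Subextension f} (hF : Monotone F) {n : ℕ}
    (a : Fin n → (iSup F).left) (d : Fin n → (iSup F).right) :
    ∃ N, (∀ i, (a i : A) ∈ (F N).left) ∧ ∀ i, (d i : B) ∈ (F N).right := by
  have hl : Monotone fun k => (F k).left := fun _ _ h => (hF h).1
  have hr : Monotone fun k => (F k).right := fun _ _ h => (hF h).2
  choose ka hka using fun i => (Subring.mem_iSup_of_directed hl.directed_le).1 (a i).2
  choose kd hkd using fun i => (Subring.mem_iSup_of_directed hr.directed_le).1 (d i).2
  obtain ⟨N, hN⟩ := Finite.exists_le (Sum.elim ka kd)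
  exact ⟨N, fun i => hl (hN (.inl i)) (hka i), fun i => hr (hN (.inr i)) (hkd i)⟩

structure Resolves (E E' : Subextension f) : Prop where
  trivialize {n : ℕ} (a : Fin n → A) (d : Fin n → B) : (∀ i, a i ∈ E.left) →
    (∀ i, d i ∈ E.right) → ∑ i, f (a i) * d i = 0 →
    ∃ (m : ℕ) (c : Fin n → Fin m → A) (y : Fin m → B),
      (∀ i j, c i j ∈ E'.left) ∧ (∀ j, y j ∈ E'.right) ∧
      (∀ i, d i = ∑ j, f (c i j) * y j) ∧ ∀ j, ∑ i, a i * c i j = 0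
  solve_one {n : ℕ} (a : Fin n → A) (d : Fin n → B) : (∀ i, a i ∈ E.left) →
    (∀ i, d i ∈ E.right) → ∑ i, f (a i) * d i = 1 →
    ∃ x : Fin n → A, (∀ i, x i ∈ E'.left) ∧ ∑ i, a i * x i = 1

theorem Resolves.mono_right {E E' E'' : Subextension f} (h : E.Resolves E') (h' : E' ≤ E'') :
    E.Resolves E'' where
  trivialize a d ha hd hsum := by
    obtain ⟨m, c, y, hc, hy, hdy, hac⟩ := h.trivialize a d ha hd hsum
    exact ⟨m, c, y, fun i j => h'.1 (hc i j), fun j => h'.2 (hy j), hdy, hac⟩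
  solve_one a d ha hd hsum := by
    obtain ⟨x, hx, hax⟩ := h.solve_one a d ha hd hsum
    exact ⟨x, fun i => h'.1 (hx i), hax⟩

theorem resolves_iSup_self {F : ℕ → Subextension f} (hF : Monotone F)
    (hres : ∀ n, (F n).Resolves (F (n + 1))) : (iSup F).Resolves (iSup F) where
  trivialize a d ha hd hsum := by
    obtain ⟨N, haN, hdN⟩ := exists_mem_stage hF (fun i => ⟨a i, ha i⟩) (fun i => ⟨d i, hd i⟩)
    exact ((hres N).mono_right (le_iSup F (N + 1))).trivialize a d haN hdN hsum
  solve_one a d ha hd hsum := by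
    obtain ⟨N, haN, hdN⟩ := exists_mem_stage hF (fun i => ⟨a i, ha i⟩) (fun i => ⟨d i, hd i⟩)
    exact ((hres N).mono_right (le_iSup F (N + 1))).solve_one a d haN hdN hsum

theorem faithfullyFlat_of_resolves_self {E : Subextension f} (h : E.Resolves E) :
    E.FaithfullyFlat := by
  let := E.restrict.toAlgebra
  have coe_algebraMap (c : E.left) : (algebraMap E.left E.right c : B) = f c := rfl
  have coe_smul (c : E.left) (z : E.right) : ((c • z : E.right) : B) = f c * z := rfl
  refine (Module.FaithfullyFlat.iff_flat_and_ideal_smul_eq_top _ _).2 ⟨?_, fun I hI => ?_⟩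
  · refine Module.Flat.of_forall_isTrivialRelation fun {n a d} hrel => ?_
    have hsum : ∑ i, f (a i) * d i = 0 := by simpa [coe_smul] using congrArg Subtype.val hrel
    obtain ⟨m, c, y, hc, hy, hdy, hac⟩ :=
      h.trivialize (fun i => (a i : A)) (fun i => (d i : B)) (fun i => (a i).2) (fun i => (d i).2)
        hsum
    exact ⟨m, fun i j => ⟨c i j, hc i j⟩, fun j => ⟨y j, hy j⟩,
      fun i => Subtype.ext (by simpa [coe_smul] using hdy i),
      fun j => Subtype.ext (by simpa using hac j)⟩
  · rw [Ideal.smul_top_eq_map, Submodule.restrictScalars_eq_top_iff, Ideal.eq_top_iff_one,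
      Ideal.map, Submodule.mem_span_set'] at hI
    obtain ⟨n, d, g, hsum⟩ := hI
    choose a haI hag using fun i => (g i).2
    have hsum' : ∑ i, f (a i) * d i = 1 := by
      simpa [← hag, coe_algebraMap, mul_comm] using congrArg Subtype.val hsum
    obtain ⟨x, hx, hax⟩ :=
      h.solve_one (fun i => (a i : A)) (fun i => (d i : B)) (fun i => (a i).2) (fun i => (d i).2)
        hsum'
    have hmem : ∑ i, a i * ⟨x i, hx i⟩ ∈ I := I.sum_mem fun i _ => I.mul_mem_right _ (haI i)
    rwa [show ∑ i, a i * ⟨x i, hx i⟩ = 1 from Subtype.ext (by simpa using hax),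
      ← Ideal.eq_top_iff_one] at hmem

theorem exists_le_resolves_small
    (hf : letI : Algebra A B := f.toAlgebra; Module.FaithfullyFlat A B)
    {κ : Cardinal.{u}} (hreg : κ.IsRegular) (hκ : ℵ₀ < κ) {E : Subextension f}
    (hE : E.Small κ) : ∃ E', E ≤ E' ∧ E.Resolves E' ∧ E'.Small κ := by
  let : Algebra A B := f.toAlgebra
  let Rel (b : B) := {t : Σ n, (Fin n → E.left) × (Fin n → E.right) //
    ∑ i, f (t.2.1 i) * t.2.2 i = b}
  have hRel (b : B) : lift.{u} #(Rel b) < lift.{u} κ := by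
    simpa using (mk_subtype_le _).trans_lt (mk_sigma_fin_arrow_prod_lt hκ hE.1 hE.2)
  choose m c y hdy hac using fun t : Rel 0 =>
    Module.Flat.isTrivialRelation_of_sum_smul_eq_zero (R := A) (M := B)
      (f := fun i => (t.1.2.1 i : A)) (x := fun i => (t.1.2.2 i : B)) t.2
  choose x hx using fun t : Rel 1 => Module.FaithfullyFlat.exists_sum_mul_eq_one
    (fun i => (t.1.2.1 i : A)) (fun i => (t.1.2.2 i : B)) t.2
  let S : Set A := E.left ∪ (⋃ t, Set.range (Function.uncurry (c t))) ∪ ⋃ t, Set.range (x t)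
  let T : Set B := E.right ∪ ⋃ t, Set.range (y t)
  have finite_lt {γ : Type u} {s : Set γ} (hs : s.Finite) : #s < κ := hs.lt_aleph0.trans hκ
  refine ⟨generate f S T, ⟨fun a ha => Subring.subset_closure (Or.inl (Or.inl ha)),
    fun b hb => Subring.subset_closure (Or.inr (Or.inl hb))⟩, ⟨?_, ?_⟩,
    small_generate hκ ?_ ?_⟩
  · intro n a d ha hd hsum
    let t : Rel 0 := ⟨⟨n, fun i => ⟨a i, ha i⟩, fun i => ⟨d i, hd i⟩⟩, hsum⟩
    refine ⟨m t, c t, y t, fun i j => ?_, fun j => ?_, hdy t, hac t⟩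
    · exact Subring.subset_closure (Or.inl (Or.inr (Set.mem_iUnion.2 ⟨t, (i, j), rfl⟩)))
    · exact Subring.subset_closure (Or.inr (Or.inr (Set.mem_iUnion.2 ⟨t, j, rfl⟩)))
  · intro n a d ha hd hsum
    let t : Rel 1 := ⟨⟨n, fun i => ⟨a i, ha i⟩, fun i => ⟨d i, hd i⟩⟩, hsum⟩
    exact ⟨x t, fun i => Subring.subset_closure (Or.inr (Set.mem_iUnion.2 ⟨t, i, rfl⟩)), hx t⟩
  · exact mk_union_lt hκ.le (mk_union_lt hκ.le hE.1 (mk_iUnion_lt_of_isRegular hreg (hRel 0)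
      fun t => finite_lt (Set.finite_range _))) (mk_iUnion_lt_of_isRegular hreg (hRel 1)
      fun t => finite_lt (Set.finite_range _))
  · exact mk_union_lt hκ.le hE.2 (mk_iUnion_lt_of_isRegular hreg (hRel 0)
      fun t => finite_lt (Set.finite_range _))

theorem exists_le_small_faithfullyFlat
    (hf : letI : Algebra A B := f.toAlgebra; Module.FaithfullyFlat A B)
    {κ : Cardinal.{u}} (hreg : κ.IsRegular) (hκ : ℵ₀ < κ) {E₀ : Subextension f}
    (h₀ : E₀.Small κ) : ∃ E, E₀ ≤ E ∧ E.Small κ ∧ E.FaithfullyFlat := by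
  choose next le_next resolves_next small_next using
    fun E : {E : Subextension f // E.Small κ} => exists_le_resolves_small hf hreg hκ E.2
  let F (n : ℕ) : {E : Subextension f // E.Small κ} :=
    Nat.rec ⟨E₀, h₀⟩ (fun _ E => ⟨next E, small_next E⟩) n
  have hF : Monotone fun n => (F n).1 := monotone_nat_of_le_succ fun n => le_next (F n)
  exact ⟨iSup fun n => (F n).1, le_iSup (fun n => (F n).1) 0,
    small_iSup hreg hκ (by simpa using hκ) fun n => (F n).2,
    faithfullyFlat_of_resolves_self (resolves_iSup_self hF fun n => resolves_next (F n))⟩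

end Subextension

/-- Let `κ` be an uncountable regular cardinal and `f : A → B` a faithfully flat
homomorphism of commutative rings.  Then: (a) every `κ`-small subextension of `f` is
contained in a `κ`-small faithfully flat subextension (the inclusion of the poset of
`κ`-small faithfully flat subextensions into the poset of `κ`-small subextensions,
ordered by componentwise inclusion, is cofinal); and (b) the poset of `κ`-small
faithfully flat subextensions is `κ`-directed: every subset of cardinality `< κ` admits
an upper bound in it. -/
theorem small_faithfullyFlat_subextensions_cofinal_and_directed
    (κ : Cardinal.{u}) (hreg : κ.IsRegular) (hκ : Cardinal.aleph0 < κ)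
    {A B : Type u} [CommRing A] [CommRing B] (f : A →+* B)
    (hf : letI : Algebra A B := f.toAlgebra; Module.FaithfullyFlat A B) :
    (∀ E' : Subextension f, E'.Small κ →
      ∃ E : Subextension f, E'.le E ∧ E.Small κ ∧ E.FaithfullyFlat) ∧
    (∀ S : Set (Subextension f), (∀ E ∈ S, E.Small κ ∧ E.FaithfullyFlat) →
      Cardinal.mk S < κ →
      ∃ E : Subextension f, E.Small κ ∧ E.FaithfullyFlat ∧ ∀ E' ∈ S, E'.le E) := by
  refine ⟨fun E' hE' => Subextension.exists_le_small_faithfullyFlat hf hreg hκ hE',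
    fun S hS hSκ => ?_⟩
  obtain ⟨E, hle, hE, hff⟩ := Subextension.exists_le_small_faithfullyFlat hf hreg hκ
    (Subextension.small_iSup hreg hκ (by simpa using hSκ) fun E : S => (hS E E.2).1)
  exact ⟨E, hE, hff, fun E' hE' => (Subextension.le_iSup (fun E : S => E.1) ⟨E', hE'⟩).trans hle⟩
end

section
/- Let κ be an infinite regular cardinal and let S be a set of cardinality at least κ. Consider the κ-directed system of all subsets A ⊆ S of cardinality < κ, ordered by inclusion, whose union is S. Then the canonical map from the colimit of the sets (A → Bool) → Bool (with transition maps induced by the inclusions, sending G to the functional χ ↦ G(χ|_A)) to the set (S → Bool) → Bool is not surjective. Consequently, the endofunctor of sets T ↦ ((T → Bool) → Bool) does not preserve κ-filtered colimits for any regular cardinal κ; that is, it is not an accessible functor. -/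
open CategoryTheory Limits

/-- The double dualization endofunctor of sets into the two-element set,
`T ↦ ((T → Bool) → Bool)`. -/
def doubleDualBool : Type ⥤ Type where
  obj T := (T → Bool) → Bool
  map f := TypeCat.ofHom fun G χ => G fun t => χ (f t)

/-- A category is `κ`-filtered if every diagram indexed by a category with fewer than
`κ` morphisms admits a cocone. -/
def IsCardinalFilteredCat (κ : Cardinal.{0}) (J : Type) [SmallCategory J] : Prop :=
  ∀ (K : Type) [SmallCategory K], Cardinal.mk (Arrow K) < κ →
    ∀ F : K ⥤ J, Nonempty (Cocone F)

/-
The functional "is constantly `true`" on `S → Bool` distinguishes the constant function `true`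
from the indicator of the complement of a point `s`; whenever `s ∉ A` these two functions have the
same restriction to `A`, so the functional factors through no proper subset `A`, in particular
through no subset of cardinality `< κ ≤ #S`. On the other hand `S` is the colimit of its subsets of
cardinality `< κ`, and this diagram is `κ`-filtered for regular `κ`; if `doubleDualBool` preserved
that colimit, every functional on `S → Bool` would come from some `(A → Bool) → Bool`.
-/

open scoped Classical in
theorem allTrue_ne_comp_restrict {S : Type} {A : Set S} (hA : A ≠ Set.univ)
    (G' : (A → Bool) → Bool) :
    (fun χ : S → Bool => decide (∀ s, χ s = true)) ≠ fun χ => G' fun a => χ a.1 := by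
  intro h
  obtain ⟨s, hs⟩ := (Set.ne_univ_iff_exists_notMem A).1 hA
  have hrestrict : (fun a : A => decide (a.1 ≠ s)) = fun _ => true := by
    funext a
    simpa using fun he : a.1 = s => hs (he ▸ a.2)
  have hconst := congrFun h fun _ => true
  have hpunctured := congrFun h fun t => decide (t ≠ s)
  simp only [hrestrict, ← hconst] at hpunctured
  simp at hpunctured

theorem ne_univ_of_mk_lt {S : Type} {κ : Cardinal} (hS : κ ≤ Cardinal.mk S) {A : Set S}
    (hA : Cardinal.mk A < κ) : A ≠ Set.univ := by
  rintro rfl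
  rw [Cardinal.mk_univ] at hA
  exact (hS.trans_lt hA).false

theorem exists_ne_comp_restrict_of_mk_lt {κ : Cardinal} {S : Type} (hS : κ ≤ Cardinal.mk S) :
    ∃ G : (S → Bool) → Bool, ∀ A : Set S, Cardinal.mk A < κ →
      ∀ G' : (A → Bool) → Bool, G ≠ fun χ => G' fun a => χ a.1 :=
  ⟨_, fun _ hA => allTrue_ne_comp_restrict (ne_univ_of_mk_lt hS hA)⟩

section SmallSubsets

variable (κ : Cardinal.{0}) (S : Type)

abbrev SmallSubsets := {A : Set S // Cardinal.mk A < κ}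

def SmallSubsets.incl : SmallSubsets κ S ⥤ Type where
  obj A := A.1
  map f := TypeCat.ofHom fun a => ⟨a.1, leOfHom f a.2⟩

def SmallSubsets.cocone : Cocone (SmallSubsets.incl κ S) where
  pt := S
  ι := { app := fun _ => TypeCat.ofHom Subtype.val }

variable {κ S}

def SmallSubsets.singleton (hκ : 1 < κ) (x : S) : SmallSubsets κ S :=
  ⟨{x}, (Cardinal.mk_singleton x).trans_lt hκ⟩

def SmallSubsets.isColimitCocone (hκ : 1 < κ) : IsColimit (SmallSubsets.cocone κ S) where
  desc c := TypeCat.ofHom fun x => c.ι.app (singleton hκ x) ⟨x, rfl⟩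
  fac c A := by
    ext a
    have hle : singleton hκ a.1 ≤ A := Set.singleton_subset_iff.2 a.2
    exact (ConcreteCategory.congr_hom (c.w (homOfLE hle)) ⟨a.1, rfl⟩).symm
  uniq c m hm := by
    ext x
    exact ConcreteCategory.congr_hom (hm (singleton hκ x)) ⟨x, rfl⟩

theorem SmallSubsets.isCardinalFilteredCat (hκ : κ.IsRegular) :
    IsCardinalFilteredCat κ (SmallSubsets κ S) := by
  intro K _ hK F
  have hKcard : Cardinal.mk K < κ :=
    (Cardinal.mk_le_of_injective (f := fun k : K => Arrow.mk (𝟙 k))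
      fun _ _ h => congrArg Comma.left h).trans_lt hK
  have hUnion : Cardinal.mk (⋃ k, (F.obj k).1) < κ :=
    (Cardinal.card_iUnion_lt_iff_forall_of_isRegular hκ hKcard).2 fun k => (F.obj k).2
  exact ⟨{ pt := ⟨_, hUnion⟩
           ι := { app := fun k => homOfLE (Set.subset_iUnion (fun k => (F.obj k).1) k) } }⟩

end SmallSubsets

/-- Part (1): for an infinite regular cardinal `κ` and a set `S` of cardinality `≥ κ`,
the canonical map from the colimit over the `κ`-directed system of subsets `A ⊆ S` of
cardinality `< κ` of the sets `(A → Bool) → Bool` to `(S → Bool) → Bool` is not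
surjective: there is a functional `G` on `S → Bool` which does not factor through
restriction to any subset of cardinality `< κ`.
Part (2): consequently the endofunctor `T ↦ ((T → Bool) → Bool)` of sets does not
preserve `κ`-filtered colimits for any regular cardinal `κ`; it is not accessible. -/
theorem doubleDualBool_not_accessible :
    (∀ κ : Cardinal.{0}, κ.IsRegular → ∀ S : Type, κ ≤ Cardinal.mk S →
      ∃ G : (S → Bool) → Bool, ∀ A : Set S, Cardinal.mk A < κ →
        ∀ G' : (A → Bool) → Bool, G ≠ fun χ => G' fun a => χ a.1) ∧
    (∀ κ : Cardinal.{0}, κ.IsRegular →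
      ¬ ∀ (J : Type) [SmallCategory J], IsCardinalFilteredCat κ J →
          Nonempty (PreservesColimitsOfShape J doubleDualBool)) := by
  refine ⟨fun κ _ _ => exists_ne_comp_restrict_of_mk_lt, fun κ hκ hpreserves => ?_⟩
  obtain ⟨G, hG⟩ := exists_ne_comp_restrict_of_mk_lt (Cardinal.mk_out κ).ge
  obtain ⟨_⟩ := hpreserves _ (SmallSubsets.isCardinalFilteredCat (S := κ.out) hκ)
  have hcolim := isColimitOfPreserves doubleDualBool
    (SmallSubsets.isColimitCocone (S := κ.out) (Cardinal.one_lt_aleph0.trans_le hκ.aleph0_le))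
  obtain ⟨A, G', hG'⟩ := Types.jointly_surjective _ hcolim G
  exact hG A.1 A.2 G' hG'.symm
end

section
/- Let p be a prime number and let R be a commutative ring in which p = 0. A formal power series f ∈ R⟦X⟧ satisfies f(X + Y) = f(X) + f(Y) in the ring of formal power series in two variables R⟦X, Y⟧ (where f(X + Y) denotes the substitution of X + Y for the variable of f, which is defined since X + Y has zero constant term) if and only if the coefficient of X^n in f vanishes for every natural number n that is not of the form p^k for some k ≥ 0 (in particular the constant coefficient of f vanishes). -/
/-!
Comparing coefficients of `X^i Y^j`, additivity of `f = ∑ aₙ Xⁿ` says exactly that `a₀ = 0` and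
`C(i + j, i) a_{i+j} = 0` whenever `i, j > 0`. If `n` is a power of `p`, all the binomial
coefficients `C(n, k)` with `0 < k < n` are divisible by `p`, hence vanish in `R`. Otherwise
Lucas' theorem gives `C(n, p^v) ≢ 0 mod p` for `p^v` the exact power of `p` dividing `n`, so this
coefficient is a unit in `R` and forces `aₙ = 0`.
-/

universe u

variable {R : Type u} [CommRing R]

/-- The substitution `f(X + Y)` of `X + Y` for the variable of a one-variable formal
power series `f`, as a formal power series in the two variables `X = X 0` and `Y = X 1`:
since `X + Y` has zero constant term, the coefficient of a monomial `d` only depends on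
the truncation of `f` in degrees `≤ d 0 + d 1`, and is the corresponding coefficient of
the polynomial obtained by substituting `X + Y` into that truncation. -/
noncomputable def PowerSeries.substAdd (f : PowerSeries R) : MvPowerSeries (Fin 2) R :=
  fun d : Fin 2 →₀ ℕ =>
    MvPowerSeries.coeff d
      (Polynomial.eval₂ ((MvPowerSeries.C : R →+* MvPowerSeries (Fin 2) R))
        (MvPowerSeries.X 0 + MvPowerSeries.X 1)
        (PowerSeries.trunc (d 0 + d 1 + 1) f))

/-- The power series `f(X)` in the first of the two variables. -/
noncomputable def PowerSeries.substFst (f : PowerSeries R) : MvPowerSeries (Fin 2) R :=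
  fun d : Fin 2 →₀ ℕ =>
    MvPowerSeries.coeff d
      (Polynomial.eval₂ ((MvPowerSeries.C : R →+* MvPowerSeries (Fin 2) R)) (MvPowerSeries.X 0)
        (PowerSeries.trunc (d 0 + d 1 + 1) f))

/-- The power series `f(Y)` in the second of the two variables. -/
noncomputable def PowerSeries.substSnd (f : PowerSeries R) : MvPowerSeries (Fin 2) R :=
  fun d : Fin 2 →₀ ℕ =>
    MvPowerSeries.coeff d
      (Polynomial.eval₂ ((MvPowerSeries.C : R →+* MvPowerSeries (Fin 2) R)) (MvPowerSeries.X 1)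
        (PowerSeries.trunc (d 0 + d 1 + 1) f))

theorem Finsupp.eq_single_zero_add_single_one_iff {M : Type*} [AddZeroClass M]
    (d : Fin 2 →₀ M) (a b : M) :
    d = single 0 a + single 1 b ↔ d 0 = a ∧ d 1 = b := by
  refine ⟨by rintro rfl; simp, fun ⟨h0, h1⟩ => ?_⟩
  ext i
  fin_cases i <;> simp [h0, h1]

theorem Finsupp.forall_fin_two {M : Type*} [AddZeroClass M] {P : M → M → Prop} :
    (∀ d : Fin 2 →₀ M, P (d 0) (d 1)) ↔ ∀ a b, P a b :=
  ⟨fun h a b => by convert h (single 0 a + single 1 b) <;> simp, fun h d => h (d 0) (d 1)⟩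

namespace MvPowerSeries

variable {S : Type*} [CommSemiring S]

theorem coeff_X_zero_pow_mul_X_one_pow (d : Fin 2 →₀ ℕ) (i j : ℕ) :
    coeff d ((X 0 : MvPowerSeries (Fin 2) S) ^ i * X 1 ^ j) =
      if d 0 = i ∧ d 1 = j then 1 else 0 := by
  rw [X_pow_eq, X_pow_eq, monomial_mul_monomial, one_mul, coeff_monomial]
  simp only [Finsupp.eq_single_zero_add_single_one_iff]

theorem coeff_X_zero_pow (d : Fin 2 →₀ ℕ) (i : ℕ) :
    coeff d ((X 0 : MvPowerSeries (Fin 2) S) ^ i) = if d 0 = i ∧ d 1 = 0 then 1 else 0 := by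
  simpa using coeff_X_zero_pow_mul_X_one_pow (S := S) d i 0

theorem coeff_X_one_pow (d : Fin 2 →₀ ℕ) (j : ℕ) :
    coeff d ((X 1 : MvPowerSeries (Fin 2) S) ^ j) = if d 0 = 0 ∧ d 1 = j then 1 else 0 := by
  simpa using coeff_X_zero_pow_mul_X_one_pow (S := S) d 0 j

theorem coeff_X_zero_add_X_one_pow (d : Fin 2 →₀ ℕ) (n : ℕ) :
    coeff d (((X 0 : MvPowerSeries (Fin 2) S) + X 1) ^ n) =
      if d 0 + d 1 = n then (n.choose (d 0) : S) else 0 := by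
  have hcond (m : ℕ × ℕ) : (d 0 = m.1 ∧ d 1 = m.2) ↔ (d 0, d 1) = m := by
    rw [Prod.ext_iff]
  rw [(Commute.all (X 0 : MvPowerSeries (Fin 2) S) (X 1)).add_pow']
  simp only [map_sum, map_nsmul, coeff_X_zero_pow_mul_X_one_pow,
    hcond, smul_ite, nsmul_one, smul_zero, Finset.sum_ite_eq,
    Finset.HasAntidiagonal.mem_antidiagonal]

end MvPowerSeries

namespace PowerSeries

theorem coeff_eval₂_C_trunc {σ S : Type*} [CommSemiring S] (f : PowerSeries S)
    (φ : MvPowerSeries σ S) (N : ℕ) (d : σ →₀ ℕ) :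
    MvPowerSeries.coeff d ((trunc N f).eval₂ MvPowerSeries.C φ) =
      ∑ i ∈ Finset.range N, coeff i f * MvPowerSeries.coeff d (φ ^ i) := by
  simp only [eval₂_trunc_eq_sum_range, map_sum, MvPowerSeries.coeff_C_mul]

theorem coeff_eval₂_C_trunc_of_lt {σ S : Type*} [CommSemiring S] (f : PowerSeries S)
    (φ : MvPowerSeries σ S) {N m : ℕ} (hm : m < N) (d : σ →₀ ℕ)
    (hφ : ∀ i, i ≠ m → MvPowerSeries.coeff d (φ ^ i) = 0) :
    MvPowerSeries.coeff d ((trunc N f).eval₂ MvPowerSeries.C φ) =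
      coeff m f * MvPowerSeries.coeff d (φ ^ m) := by
  rw [coeff_eval₂_C_trunc, Finset.sum_eq_single_of_mem m (Finset.mem_range.mpr hm)]
  intro i _ hi
  rw [hφ i hi, mul_zero]

theorem coeff_substAdd (f : PowerSeries R) (d : Fin 2 →₀ ℕ) :
    MvPowerSeries.coeff d f.substAdd =
      ((d 0 + d 1).choose (d 0) : R) * coeff (d 0 + d 1) f := by
  refine (coeff_eval₂_C_trunc_of_lt f (MvPowerSeries.X 0 + MvPowerSeries.X 1)
    (Nat.lt_succ_self (d 0 + d 1)) d fun i hi => ?_).trans ?_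
  · rw [MvPowerSeries.coeff_X_zero_add_X_one_pow, if_neg hi.symm]
  · rw [MvPowerSeries.coeff_X_zero_add_X_one_pow, if_pos rfl, mul_comm]

theorem coeff_substFst (f : PowerSeries R) (d : Fin 2 →₀ ℕ) :
    MvPowerSeries.coeff d f.substFst = if d 1 = 0 then coeff (d 0) f else 0 := by
  refine (coeff_eval₂_C_trunc_of_lt f _ (by omega : d 0 < d 0 + d 1 + 1) d
    fun i hi => ?_).trans ?_
  · rw [MvPowerSeries.coeff_X_zero_pow, if_neg fun h => hi h.1.symm]
  · simp [MvPowerSeries.coeff_X_zero_pow]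

theorem coeff_substSnd (f : PowerSeries R) (d : Fin 2 →₀ ℕ) :
    MvPowerSeries.coeff d f.substSnd = if d 0 = 0 then coeff (d 1) f else 0 := by
  refine (coeff_eval₂_C_trunc_of_lt f _ (by omega : d 1 < d 0 + d 1 + 1) d
    fun i hi => ?_).trans ?_
  · rw [MvPowerSeries.coeff_X_one_pow, if_neg fun h => hi h.2.symm]
  · simp [MvPowerSeries.coeff_X_one_pow]

theorem substAdd_eq_substFst_add_substSnd_iff_forall_coeff (f : PowerSeries R) :
    f.substAdd = f.substFst + f.substSnd ↔ ∀ i j : ℕ,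
      ((i + j).choose i : R) * coeff (i + j) f =
        (if j = 0 then coeff i f else 0) + (if i = 0 then coeff j f else 0) := by
  rw [MvPowerSeries.ext_iff, ← Finsupp.forall_fin_two]
  simp only [map_add, coeff_substAdd, coeff_substFst, coeff_substSnd]

theorem substAdd_eq_substFst_add_substSnd_iff (f : PowerSeries R) :
    f.substAdd = f.substFst + f.substSnd ↔
      coeff 0 f = 0 ∧ ∀ n k, 0 < k → k < n → (n.choose k : R) * coeff n f = 0 := by
  rw [substAdd_eq_substFst_add_substSnd_iff_forall_coeff]
  constructor
  · intro h
    refine ⟨by simpa using h 0 0, fun n k hk hkn => ?_⟩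
    simpa [Nat.add_sub_cancel' hkn.le, hk.ne', (Nat.sub_pos_of_lt hkn).ne'] using h k (n - k)
  · rintro ⟨h0, h⟩ i j
    rcases Nat.eq_zero_or_pos i with rfl | hi
    · rcases Nat.eq_zero_or_pos j with rfl | hj
      · simp [h0]
      · simp [hj.ne']
    · rcases Nat.eq_zero_or_pos j with rfl | hj
      · simp [hi.ne']
      · simpa [hi.ne', hj.ne'] using h (i + j) i hi (by omega)

end PowerSeries

theorem Nat.exists_not_dvd_choose_of_ne_pow {p n : ℕ} (hp : p.Prime) (hn : 0 < n)
    (h : ∀ k, n ≠ p ^ k) : ∃ k, 0 < k ∧ k < n ∧ ¬ p ∣ n.choose k := by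
  have := Fact.mk hp
  by_contra! hdvd
  refine h _ (Choose.eq_pow_multiplicity_of_choose_modEq_zero_nat hn fun i hi => ?_)
  rw [Finset.mem_Icc] at hi
  exact Nat.modEq_zero_iff_dvd.mpr (hdvd i hi.1 (by omega))

theorem Nat.Coprime.isUnit_natCast_of_cast_eq_zero {m p : ℕ} (h : m.Coprime p)
    (hpR : (p : R) = 0) : IsUnit (m : R) := by
  rw [← isCoprime_zero_right, ← hpR]
  exact h.cast

theorem forall_choose_mul_eq_zero_iff {p n : ℕ} (hp : p.Prime) (hpR : (p : R) = 0) (hn : 0 < n)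
    (a : R) : (∀ k, 0 < k → k < n → (n.choose k : R) * a = 0) ↔ ((∀ k, n ≠ p ^ k) → a = 0) := by
  constructor
  · intro h hpow
    obtain ⟨k, hk, hkn, hndvd⟩ := Nat.exists_not_dvd_choose_of_ne_pow hp hn hpow
    have hunit := ((hp.coprime_iff_not_dvd.mpr hndvd).symm).isUnit_natCast_of_cast_eq_zero hpR
    exact hunit.mul_right_eq_zero.mp (h k hk hkn)
  · intro h k hk hkn
    by_cases hpow : ∃ e, n = p ^ e
    · obtain ⟨e, rfl⟩ := hpow
      have hdvd : (p : R) ∣ ((p ^ e).choose k : R) :=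
        Nat.cast_dvd_cast (hp.dvd_choose_pow hk.ne' hkn.ne)
      rw [hpR, zero_dvd_iff] at hdvd
      rw [hdvd, zero_mul]
    · push Not at hpow
      rw [h hpow, mul_zero]

/-- Let `p` be a prime number and `R` a commutative ring in which `p = 0`.  A formal
power series `f ∈ R⟦X⟧` is additive, i.e. satisfies `f(X + Y) = f(X) + f(Y)` in
`R⟦X, Y⟧`, if and only if the coefficient of `X^n` in `f` vanishes for every `n` that is
not of the form `p^k` (in particular the constant coefficient vanishes). -/
theorem powerSeries_additive_iff_coeff_support_pow_prime
    (p : ℕ) (hp : p.Prime) (hpR : (p : R) = 0) (f : PowerSeries R) :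
    f.substAdd = f.substFst + f.substSnd ↔
      ∀ n : ℕ, (∀ k : ℕ, n ≠ p ^ k) → PowerSeries.coeff n f = 0 := by
  rw [PowerSeries.substAdd_eq_substFst_add_substSnd_iff]
  constructor
  · rintro ⟨h0, hchoose⟩ n hn
    rcases Nat.eq_zero_or_pos n with rfl | hpos
    · exact h0
    · exact (forall_choose_mul_eq_zero_iff hp hpR hpos _).mp (hchoose n) hn
  · intro h
    refine ⟨h 0 fun k => (pow_pos hp.pos k).ne, fun n k hk hkn => ?_⟩
    exact (forall_choose_mul_eq_zero_iff hp hpR (hk.trans hkn) _).mpr (h n) k hk hkn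
end

section
/- Let p be a prime number, let R be a commutative ring in which p = 0, and let b, d : ℕ → R be sequences. Let f, g ∈ R⟦X⟧ be the power series whose coefficient of X^{p^i} equals b(i) (respectively d(i)) for every i ≥ 0 and all of whose coefficients in degrees that are not powers of p vanish. Then the composite power series g(f(X)) (the substitution of f, which has zero constant term, into g) has coefficient of X^{p^n} equal to Σ_{i + j = n} b(i)^{p^j} · d(j), and its coefficients in all degrees that are not powers of p vanish. -/
/-!
In characteristic `p`, raising a power series to the `p^j`-th power applies the `j`-th iterated
Frobenius to its coefficients and substitutes `X ↦ X^{p^j}`. Hence if `f` is supported in degrees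
`p^i`, so is `f^{p^j}`, with coefficient `b(i)^{p^j}` in degree `p^{i+j}`; and since `g` is
supported in degrees `p^j`, the composite is `g(f) = ∑ⱼ d(j) f^{p^j}`.
-/

universe u

variable {R : Type u} [CommRing R]

/-- The composite `g(f(X))` of two one-variable formal power series (the substitution of
`f`, assumed to have zero constant term, into `g`): the coefficient of `X^n` only
depends on the truncation of `g` in degrees `≤ n`, and is the corresponding coefficient
of the power series obtained by substituting `f` into that truncation. -/
noncomputable def PowerSeries.compose (g f : PowerSeries R) : PowerSeries R :=
  PowerSeries.mk fun n =>
    PowerSeries.coeff (R := R) n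
      (Polynomial.eval₂ (PowerSeries.C (R := R)) f (PowerSeries.trunc (n + 1) g))

open Finset

theorem Finset.sum_range_pow_add_one_of_eq_zero_of_ne_pow {M : Type*} [AddCommMonoid M]
    {p : ℕ} (hp : 1 < p) {F : ℕ → M} (hF : ∀ k, (∀ i, k ≠ p ^ i) → F k = 0) (n : ℕ) :
    ∑ k ∈ range (p ^ n + 1), F k = ∑ j ∈ range (n + 1), F (p ^ j) := by
  have hsub : (range (n + 1)).image (p ^ ·) ⊆ range (p ^ n + 1) := by
    simp only [subset_iff, mem_image, mem_range]
    rintro _ ⟨j, hj, rfl⟩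
    exact Nat.lt_succ_of_le (Nat.pow_le_pow_right (by omega) (by omega))
  have hzero : ∀ k ∈ range (p ^ n + 1), k ∉ (range (n + 1)).image (p ^ ·) → F k = 0 := by
    refine fun k hk hk' => hF k fun i hi => hk' (mem_image.2 ⟨i, ?_, hi.symm⟩)
    have : p ^ i ≤ p ^ n := by rw [mem_range] at hk; omega
    exact mem_range.2 (Nat.lt_succ_of_le ((Nat.pow_le_pow_iff_right hp).1 this))
  rw [← sum_subset hsub hzero, sum_image fun _ _ _ _ h => Nat.pow_right_injective hp h]

namespace PowerSeries

theorem coeff_compose (g f : PowerSeries R) (m : ℕ) :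
    coeff m (g.compose f) = ∑ k ∈ range (m + 1), coeff k g * coeff m (f ^ k) := by
  rw [compose, coeff_mk, trunc_apply, Polynomial.eval₂_finsetSum, map_sum, range_eq_Ico]
  refine sum_congr rfl fun k _ => ?_
  rw [Polynomial.eval₂_monomial, coeff_C_mul]

section ExpChar

variable {p : ℕ} [ExpChar R p]

theorem pow_expChar_pow_eq_map_expand (f : PowerSeries R) (j : ℕ) :
    f ^ p ^ j =
      map (iterateFrobenius R p j) (expand (p ^ j) (pow_ne_zero j (expChar_ne_zero R p)) f) :=
  (MvPowerSeries.map_iterateFrobenius_expand p (expChar_ne_zero R p) f j).symm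

theorem coeff_pow_expChar_pow (f : PowerSeries R) (j m : ℕ) :
    coeff m (f ^ p ^ j) = if p ^ j ∣ m then coeff (m / p ^ j) f ^ p ^ j else 0 := by
  rw [pow_expChar_pow_eq_map_expand, coeff_map, coeff_expand]
  split_ifs
  · rfl
  · exact map_zero _

theorem coeff_pow_expChar_pow_pow {f : PowerSeries R} {j n : ℕ} (h : j ≤ n) :
    coeff (p ^ n) (f ^ p ^ j) = coeff (p ^ (n - j)) f ^ p ^ j := by
  rw [coeff_pow_expChar_pow, if_pos (pow_dvd_pow p h),
    Nat.pow_div h (Nat.pos_of_ne_zero (expChar_ne_zero R p))]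

theorem coeff_pow_expChar_pow_eq_zero_of_ne_pow {f : PowerSeries R}
    (hf : ∀ m, (∀ i, m ≠ p ^ i) → coeff m f = 0) {m : ℕ} (hm : ∀ i, m ≠ p ^ i) (j : ℕ) :
    coeff m (f ^ p ^ j) = 0 := by
  rw [coeff_pow_expChar_pow]
  split_ifs with hdvd
  · have hquot : ∀ i, m / p ^ j ≠ p ^ i := fun i hi =>
      hm (i + j) (by rw [pow_add, ← hi, Nat.div_mul_cancel hdvd])
    rw [hf _ hquot, zero_pow (pow_ne_zero j (expChar_ne_zero R p))]
  · rfl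

end ExpChar

end PowerSeries

/-- Let `p` be prime, `R` a commutative ring with `p = 0`, and `b d : ℕ → R`.  Let
`f, g ∈ R⟦X⟧` be the power series whose coefficient of `X^{p^i}` is `b i`
(respectively `d i`) and whose coefficients in degrees that are not powers of `p`
vanish.  Then the composite `g(f(X))` has coefficient of `X^{p^n}` equal to
`∑_{i+j=n} b(i)^{p^j} · d(j)`, and its coefficients in all degrees that are not powers
of `p` vanish. -/
theorem compose_additive_powerSeries_coeff
    (p : ℕ) (hp : p.Prime) (hpR : (p : R) = 0) (b d : ℕ → R) (f g : PowerSeries R)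
    (hfb : ∀ i : ℕ, PowerSeries.coeff (R := R) (p ^ i) f = b i)
    (hf0 : ∀ m : ℕ, (∀ i : ℕ, m ≠ p ^ i) → PowerSeries.coeff (R := R) m f = 0)
    (hgd : ∀ i : ℕ, PowerSeries.coeff (R := R) (p ^ i) g = d i)
    (hg0 : ∀ m : ℕ, (∀ i : ℕ, m ≠ p ^ i) → PowerSeries.coeff (R := R) m g = 0) :
    (∀ n : ℕ, PowerSeries.coeff (R := R) (p ^ n) (g.compose f) =
      ∑ ij ∈ Finset.HasAntidiagonal.antidiagonal n, b ij.1 ^ p ^ ij.2 * d ij.2) ∧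
    (∀ m : ℕ, (∀ k : ℕ, m ≠ p ^ k) → PowerSeries.coeff (R := R) m (g.compose f) = 0) := by
  rcases subsingleton_or_nontrivial R with _ | _
  · exact ⟨fun _ => Subsingleton.elim _ _, fun _ _ => Subsingleton.elim _ _⟩
  have : Fact p.Prime := ⟨hp⟩
  have : CharP R p := (CharP.charP_iff_prime_eq_zero hp).2 hpR
  refine ⟨fun n => ?_, fun m hm => ?_⟩
  · rw [PowerSeries.coeff_compose, sum_range_pow_add_one_of_eq_zero_of_ne_pow hp.one_lt
      (fun k hk => by rw [hg0 k hk, zero_mul]), ← Nat.sum_antidiagonal_swap,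
      Nat.sum_antidiagonal_eq_sum_range_succ_mk]
    refine sum_congr rfl fun j hj => ?_
    rw [hgd, PowerSeries.coeff_pow_expChar_pow_pow (Nat.lt_succ_iff.1 (mem_range.1 hj)), hfb,
      mul_comm]
    rfl
  · rw [PowerSeries.coeff_compose]
    refine sum_eq_zero fun k _ => ?_
    by_cases hk : ∃ j, k = p ^ j
    · obtain ⟨j, rfl⟩ := hk
      rw [PowerSeries.coeff_pow_expChar_pow_eq_zero_of_ne_pow hf0 hm, mul_zero]
    · rw [hg0 k (fun i hi => hk ⟨i, hi⟩), zero_mul]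
end

section
/- Let p be a prime number and let A = F_p[ξ_1, ξ_2, ξ_3, …] be the polynomial ring over the field F_p with p elements on countably many variables ξ_i indexed by integers i ≥ 1; set ξ_0 = 1 by convention. Let ψ : A → A ⊗_{F_p} A be the F_p-algebra homomorphism determined by ψ(ξ_i) = Σ_{j = 0}^{i} ξ_{i−j}^{p^j} ⊗ ξ_j for all i ≥ 1, and let ε : A → F_p be the F_p-algebra homomorphism with ε(ξ_i) = 0 for all i ≥ 1. Then ψ is coassociative, i.e. (ψ ⊗ id) ∘ ψ = (id ⊗ ψ) ∘ ψ after identifying (A ⊗ A) ⊗ A with A ⊗ (A ⊗ A) by the associativity isomorphism, and ε is a counit for ψ, i.e. (ε ⊗ id) ∘ ψ = id_A = (id ⊗ ε) ∘ ψ after the unit isomorphisms F_p ⊗ A ≅ A ≅ A ⊗ F_p. -/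
/-!
Both sides of each identity are algebra maps out of a polynomial ring, so it suffices to compare
them on the `ξ_k`, where `ψ ξ_k = ∑_{a+b=k} ξ_a^{p^b} ⊗ ξ_b` (this also holds for `k = 0`).
As `ψ` commutes with the Frobenius, `ψ (ξ_a^{p^c}) = ∑_{a'+b'=a} ξ_{a'}^{p^{b'+c}} ⊗ ξ_{b'}^{p^c}`,
so both iterated coproducts of `ξ_k` equal `∑_{a+b+c=k} ξ_a^{p^{b+c}} ⊗ ξ_b^{p^c} ⊗ ξ_c`.
Applying the counit kills every term except the one with `ξ_0 = 1` in the counit's factor.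
-/

open scoped TensorProduct

/-- The generators `ξᵢ` (for `i ≥ 1`) of the polynomial ring
`A = F_p[ξ₁, ξ₂, …]`, with the convention `ξ₀ = 1`. -/
noncomputable def steenrodXi (p : ℕ) (i : ℕ) : MvPolynomial ℕ+ (ZMod p) :=
  if h : 0 < i then MvPolynomial.X (⟨i, h⟩ : ℕ+) else 1

open Finset MvPolynomial

theorem Finset.sum_antidiagonal_antidiagonal_fst_eq_snd {A M : Type*} [AddMonoid A]
    [HasAntidiagonal A] [AddCommMonoid M] (n : A) (f : A → A → A → M) :
    ∑ x ∈ antidiagonal n, ∑ y ∈ antidiagonal x.1, f y.1 y.2 x.2 =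
      ∑ x ∈ antidiagonal n, ∑ y ∈ antidiagonal x.2, f x.1 y.1 y.2 := by
  simp only [sum_sigma']
  apply sum_nbij' (fun ⟨⟨_, c⟩, ⟨a, b⟩⟩ ↦ ⟨(a, b + c), (b, c)⟩)
    (fun ⟨⟨a, _⟩, ⟨b, c⟩⟩ ↦ ⟨(a + b, c), (a, b)⟩) <;> aesop (add simp [add_assoc])

theorem Algebra.TensorProduct.sum_tmul_pow_expChar_pow {R A B ι : Type*} [CommSemiring R]
    [CommSemiring A] [CommSemiring B] [Algebra R A] [Algebra R B] (p : ℕ)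
    [ExpChar (A ⊗[R] B) p] (n : ℕ) (s : Finset ι) (a : ι → A) (b : ι → B) :
    (∑ i ∈ s, a i ⊗ₜ[R] b i) ^ p ^ n = ∑ i ∈ s, (a i ^ p ^ n) ⊗ₜ[R] (b i ^ p ^ n) := by
  simp only [sum_pow_char_pow, tmul_pow]

section DualSteenrod

variable {p : ℕ}

theorem steenrodXi_zero : steenrodXi p 0 = 1 := rfl

theorem steenrodXi_coe (i : ℕ+) : steenrodXi p i = X i :=
  dif_pos i.pos

theorem algHom_ext_steenrodXi {B : Type*} [Semiring B] [Algebra (ZMod p) B]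
    {f g : MvPolynomial ℕ+ (ZMod p) →ₐ[ZMod p] B}
    (h : ∀ k : ℕ, f (steenrodXi p k) = g (steenrodXi p k)) : f = g :=
  algHom_ext fun i ↦ by simpa only [steenrodXi_coe] using h i

def IsMilnorCoproduct (p : ℕ) (ψ : MvPolynomial ℕ+ (ZMod p) →ₐ[ZMod p]
      (MvPolynomial ℕ+ (ZMod p) ⊗[ZMod p] MvPolynomial ℕ+ (ZMod p))) : Prop :=
  ∀ i : ℕ+, ψ (X i) =
    ∑ j ∈ range ((i : ℕ) + 1), (steenrodXi p ((i : ℕ) - j) ^ p ^ j) ⊗ₜ[ZMod p] steenrodXi p j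

theorem counit_apply_steenrodXi {ε : MvPolynomial ℕ+ (ZMod p) →ₐ[ZMod p] ZMod p}
    (hε : ∀ i : ℕ+, ε (X i) = 0) (k : ℕ) : ε (steenrodXi p k) = if k = 0 then 1 else 0 := by
  rcases k with _ | k
  · simp [steenrodXi_zero]
  · simpa using steenrodXi_coe ⟨k + 1, k.succ_pos⟩ ▸ hε ⟨k + 1, k.succ_pos⟩

namespace IsMilnorCoproduct

variable {ψ : MvPolynomial ℕ+ (ZMod p) →ₐ[ZMod p]
    (MvPolynomial ℕ+ (ZMod p) ⊗[ZMod p] MvPolynomial ℕ+ (ZMod p))} (hψ : IsMilnorCoproduct p ψ)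
include hψ

theorem apply_steenrodXi (k : ℕ) :
    ψ (steenrodXi p k) =
      ∑ x ∈ antidiagonal k, (steenrodXi p x.1 ^ p ^ x.2) ⊗ₜ[ZMod p] steenrodXi p x.2 := by
  rw [← Nat.sum_antidiagonal_swap]
  simp only [Prod.fst_swap, Prod.snd_swap]
  rw [Nat.sum_antidiagonal_eq_sum_range_succ
    fun a b ↦ (steenrodXi p b ^ p ^ a) ⊗ₜ[ZMod p] steenrodXi p a]
  rcases k with _ | k
  · simp [steenrodXi_zero, Algebra.TensorProduct.one_def]
  · exact steenrodXi_coe ⟨k + 1, k.succ_pos⟩ ▸ hψ ⟨k + 1, k.succ_pos⟩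

theorem apply_steenrodXi_pow [Fact p.Prime] (k n : ℕ) :
    ψ (steenrodXi p k ^ p ^ n) = ∑ x ∈ antidiagonal k,
      (steenrodXi p x.1 ^ p ^ (x.2 + n)) ⊗ₜ[ZMod p] (steenrodXi p x.2 ^ p ^ n) := by
  have : CharP (MvPolynomial ℕ+ (ZMod p) ⊗[ZMod p] MvPolynomial ℕ+ (ZMod p)) p :=
    charP_of_injective_algebraMap' (ZMod p) p
  simp only [map_pow, hψ.apply_steenrodXi, Algebra.TensorProduct.sum_tmul_pow_expChar_pow p,
    ← pow_mul, ← pow_add]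

theorem coassoc [Fact p.Prime] :
    (Algebra.TensorProduct.assoc (ZMod p) (ZMod p) (ZMod p) (MvPolynomial ℕ+ (ZMod p))
          (MvPolynomial ℕ+ (ZMod p)) (MvPolynomial ℕ+ (ZMod p))).toAlgHom.comp
        ((Algebra.TensorProduct.map ψ (AlgHom.id (ZMod p) _)).comp ψ) =
      (Algebra.TensorProduct.map (AlgHom.id (ZMod p) _) ψ).comp ψ := by
  refine algHom_ext_steenrodXi fun k ↦ ?_
  simp only [AlgHom.comp_apply, AlgEquiv.coe_toAlgHom, hψ.apply_steenrodXi,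
    map_sum, Algebra.TensorProduct.map_tmul, AlgHom.id_apply, hψ.apply_steenrodXi_pow,
    TensorProduct.sum_tmul, TensorProduct.tmul_sum, Algebra.TensorProduct.assoc_tmul]
  rw [sum_antidiagonal_antidiagonal_fst_eq_snd k fun a b c ↦
    (steenrodXi p a ^ p ^ (b + c)) ⊗ₜ[ZMod p] ((steenrodXi p b ^ p ^ c) ⊗ₜ[ZMod p] steenrodXi p c)]
  refine sum_congr rfl fun x _ ↦ sum_congr rfl fun y hy ↦ ?_
  rw [mem_antidiagonal.1 hy]

section Counit

variable {ε : MvPolynomial ℕ+ (ZMod p) →ₐ[ZMod p] ZMod p} (hε : ∀ i : ℕ+, ε (X i) = 0)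
include hε

theorem lid_comp_map_counit_comp [NeZero p] :
    (Algebra.TensorProduct.lid (ZMod p) (MvPolynomial ℕ+ (ZMod p))).toAlgHom.comp
        ((Algebra.TensorProduct.map ε (AlgHom.id (ZMod p) _)).comp ψ) =
      AlgHom.id (ZMod p) (MvPolynomial ℕ+ (ZMod p)) := by
  refine algHom_ext_steenrodXi fun k ↦ ?_
  simp only [AlgHom.comp_apply, AlgEquiv.coe_toAlgHom, hψ.apply_steenrodXi,
    map_sum, Algebra.TensorProduct.map_tmul, AlgHom.id_apply, map_pow,
    counit_apply_steenrodXi hε, Algebra.TensorProduct.lid_tmul]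
  simp [Nat.sum_antidiagonal_eq_sum_range_succ_mk, NeZero.ne p]

theorem rid_comp_map_counit_comp :
    (Algebra.TensorProduct.rid (ZMod p) (ZMod p) (MvPolynomial ℕ+ (ZMod p))).toAlgHom.comp
        ((Algebra.TensorProduct.map (AlgHom.id (ZMod p) _) ε).comp ψ) =
      AlgHom.id (ZMod p) (MvPolynomial ℕ+ (ZMod p)) := by
  refine algHom_ext_steenrodXi fun k ↦ ?_
  simp only [AlgHom.comp_apply, AlgEquiv.coe_toAlgHom, hψ.apply_steenrodXi,
    map_sum, Algebra.TensorProduct.map_tmul, AlgHom.id_apply,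
    counit_apply_steenrodXi hε, Algebra.TensorProduct.rid_tmul]
  rw [← Nat.sum_antidiagonal_swap]
  simp [Nat.sum_antidiagonal_eq_sum_range_succ_mk]

end Counit

end IsMilnorCoproduct

end DualSteenrod

/-- Milnor's coalgebra structure on the (even part of the) dual Steenrod algebra
`A = F_p[ξ₁, ξ₂, …]`: the `F_p`-algebra homomorphism `ψ : A → A ⊗ A` determined by
`ψ(ξᵢ) = ∑_{0 ≤ j ≤ i} ξ_{i-j}^{p^j} ⊗ ξ_j` is coassociative, and the `F_p`-algebra
homomorphism `ε : A → F_p` with `ε(ξᵢ) = 0` for `i ≥ 1` is a counit for it. -/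
theorem dualSteenrod_coassoc_and_counit (p : ℕ) (hp : p.Prime)
    (ψ : MvPolynomial ℕ+ (ZMod p) →ₐ[ZMod p]
      (MvPolynomial ℕ+ (ZMod p) ⊗[ZMod p] MvPolynomial ℕ+ (ZMod p)))
    (hψ : ∀ i : ℕ+, ψ (MvPolynomial.X i) =
      ∑ j ∈ Finset.range ((i : ℕ) + 1),
        ((steenrodXi p ((i : ℕ) - j)) ^ (p ^ j)) ⊗ₜ[ZMod p] (steenrodXi p j))
    (ε : MvPolynomial ℕ+ (ZMod p) →ₐ[ZMod p] ZMod p)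
    (hε : ∀ i : ℕ+, ε (MvPolynomial.X i) = 0) :
    -- coassociativity
    ((Algebra.TensorProduct.assoc (ZMod p) (ZMod p) (ZMod p) (MvPolynomial ℕ+ (ZMod p))
          (MvPolynomial ℕ+ (ZMod p)) (MvPolynomial ℕ+ (ZMod p))).toAlgHom.comp
        ((Algebra.TensorProduct.map ψ (AlgHom.id (ZMod p) _)).comp ψ) =
      (Algebra.TensorProduct.map (AlgHom.id (ZMod p) _) ψ).comp ψ) ∧
    -- left counit law
    ((Algebra.TensorProduct.lid (ZMod p) (MvPolynomial ℕ+ (ZMod p))).toAlgHom.comp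
        ((Algebra.TensorProduct.map ε (AlgHom.id (ZMod p) _)).comp ψ) =
      AlgHom.id (ZMod p) (MvPolynomial ℕ+ (ZMod p))) ∧
    -- right counit law
    ((Algebra.TensorProduct.rid (ZMod p) (ZMod p)
          (MvPolynomial ℕ+ (ZMod p))).toAlgHom.comp
        ((Algebra.TensorProduct.map (AlgHom.id (ZMod p) _) ε).comp ψ) =
      AlgHom.id (ZMod p) (MvPolynomial ℕ+ (ZMod p))) := by
  have : Fact p.Prime := ⟨hp⟩
  exact ⟨IsMilnorCoproduct.coassoc hψ, IsMilnorCoproduct.lid_comp_map_counit_comp hψ hε,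
    IsMilnorCoproduct.rid_comp_map_counit_comp hψ hε⟩
end
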